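/- For all real numbers α, β with 0 < α < β < π/2, the following two inequalities hold: sin β / sin α < β / α, and β / α < (sin((α+β)/2) + sin((β−α)/2)) / (sin((α+β)/2) − sin((β−α)/2)). -/

import Mathlib

/-!
Both bounds compare slopes of chords through the origin. Since `sin` is strictly concave on
`[0, π]`, `sin x / x` decreases there; since `tan` is strictly convex on `[0, π/2)`,
`tan x / x` increases there. By the sum-to-product formulas the right-hand ratio equals
`tan (β/2) / tan (α/2)`.
-/

open Real Set

theorem strictConvexOn_tan_Ico : StrictConvexOn ℝ (Ico 0 (π / 2)) tan := by
  refine StrictMonoOn.strictConvexOn_of_deriv (convex_Ico 0 (π / 2)) ?_ ?_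
  · refine continuousOn_tan_Ioo.mono fun x hx ↦ ⟨?_, hx.2⟩
    linarith [hx.1, pi_pos]
  · rw [interior_Ico]
    intro x hx y hy hxy
    have hcos_y : 0 < cos y := cos_pos_of_mem_Ioo ⟨by linarith [hy.1, pi_pos], hy.2⟩
    have hcos_lt : cos y < cos x :=
      strictAntiOn_cos ⟨hx.1.le, by linarith [hx.2, pi_pos]⟩
        ⟨hy.1.le, by linarith [hy.2, pi_pos]⟩ hxy
    simp only [deriv_tan]
    gcongr

theorem sin_div_lt_sin_div {x y : ℝ} (hx : 0 < x) (hxy : x < y) (hy : y ≤ π) :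
    sin y / y < sin x / x := by
  simpa using strictConcaveOn_sin_Icc.secant_strict_mono (a := 0) ⟨le_rfl, pi_pos.le⟩
    ⟨hx.le, hxy.le.trans hy⟩ ⟨(hx.trans hxy).le, hy⟩ hx.ne' (hx.trans hxy).ne' hxy

theorem tan_div_lt_tan_div {x y : ℝ} (hx : 0 < x) (hxy : x < y) (hy : y < π / 2) :
    tan x / x < tan y / y := by
  simpa using strictConvexOn_tan_Ico.secant_strict_mono (a := 0) ⟨le_rfl, pi_div_two_pos⟩
    ⟨hx.le, hxy.trans hy⟩ ⟨(hx.trans hxy).le, hy⟩ hx.ne' (hx.trans hxy).ne' hxy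

-- No side conditions: in every degenerate case both sides are `0` because `x / 0 = 0`.
theorem sin_add_add_sin_sub_div_sin_add_sub_sin_sub (a b : ℝ) :
    (sin (b + a) + sin (b - a)) / (sin (b + a) - sin (b - a)) = tan b / tan a := by
  rw [sin_add, sin_sub, tan_eq_sin_div_cos, tan_eq_sin_div_cos, div_div_div_eq,
    ← mul_div_mul_left _ (cos b * sin a) two_ne_zero]
  ring_nf

theorem ibn_alhaytham_lemma1 (α β : ℝ) (hα : 0 < α) (hαβ : α < β) (hβ : β < π / 2) :
    Real.sin β / Real.sin α < β / α ∧
    β / α < (Real.sin ((α + β) / 2) + Real.sin ((β - α) / 2)) /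
            (Real.sin ((α + β) / 2) - Real.sin ((β - α) / 2)) := by
  have hβ₀ : 0 < β := hα.trans hαβ
  constructor
  · have hsin : 0 < sin α := sin_pos_of_pos_of_lt_pi hα (by linarith [pi_pos])
    have h := sin_div_lt_sin_div hα hαβ (by linarith [pi_pos])
    rw [div_lt_div_iff₀ hβ₀ hα] at h
    rwa [div_lt_div_iff₀ hsin hα, mul_comm β]
  · have h := tan_div_lt_tan_div (half_pos hα) (by linarith) (by linarith : β / 2 < π / 2)
    have htan : 0 < tan (α / 2) := tan_pos_of_pos_of_lt_pi_div_two (half_pos hα) (by linarith)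
    rw [div_lt_div_iff₀ (half_pos hα) (half_pos hβ₀)] at h
    rw [show (α + β) / 2 = β / 2 + α / 2 by ring, show (β - α) / 2 = β / 2 - α / 2 by ring,
      sin_add_add_sin_sub_div_sin_add_sub_sin_sub, div_lt_div_iff₀ hα htan]
    linarith
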